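/- For a finite poset P, let O(P) = {f : P → [0,1] : x ≤ y ⟹ f(x) ≤ f(y)} be the order polytope and C(P) = {g : P → ℝ_{≥0} : g(x_1)+...+g(x_k) ≤ 1 for every chain x_1 < ... < x_k} the chain polytope; then the transfer map φ: O(P) → C(P) defined by φ(f)(x) = f(x) − max{f(y) : y is covered by x} (the max taken to be 0 if x is minimal) is well defined, i.e. it sends O(P) into C(P). -/

import Mathlib

open Classical in
/-- Stanley's transfer map: `φ(f)(x) = f(x) − max{f(y) : y < x}`,
where the max over the empty set is `0`. -/
noncomputable def transfer {P : Type*} [Fintype P] [PartialOrder P]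
    (f : P → ℝ) (x : P) : ℝ :=
  f x - (insert (0 : ℝ) ((Finset.univ.filter (fun y => y < x)).image f)).max'
    (Finset.insert_nonempty _ _)

/-- The order polytope: order-preserving functions `P → [0,1]`. -/
def orderPolytope (P : Type*) [Fintype P] [PartialOrder P] : Set (P → ℝ) :=
  {f | (∀ x, 0 ≤ f x ∧ f x ≤ 1) ∧ ∀ x y : P, x ≤ y → f x ≤ f y}

/-- The chain polytope: nonnegative functions summing to at most `1` on chains. -/
def chainPolytope (P : Type*) [Fintype P] [PartialOrder P] : Set (P → ℝ) :=
  {g | (∀ x, 0 ≤ g x) ∧ ∀ C : Finset P, IsChain (· ≤ ·) (C : Set P) → ∑ x ∈ C, g x ≤ 1}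

/-- The transfer map sends the order polytope into the chain polytope. -/
theorem transfer_mem_chainPolytope {P : Type*} [Fintype P] [PartialOrder P]
    (f : P → ℝ) (hf : f ∈ orderPolytope P) : transfer f ∈ chainPolytope P := by
  classical
  obtain ⟨hb, hm⟩ := hf
  set M : P → ℝ := fun x =>
    (insert (0 : ℝ) ((Finset.univ.filter (fun y => y < x)).image f)).max'
      (Finset.insert_nonempty _ _) with hM
  have hM0 : ∀ x, 0 ≤ M x := fun x =>
    Finset.le_max' _ 0 (Finset.mem_insert_self _ _)
  have hMlt : ∀ {y x : P}, y < x → f y ≤ M x := by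
    intro y x hyx
    apply Finset.le_max'
    apply Finset.mem_insert_of_mem
    apply Finset.mem_image_of_mem
    simp [hyx]
  have hMle : ∀ x, M x ≤ f x := by
    intro x
    apply Finset.max'_le
    intro a ha
    rcases Finset.mem_insert.1 ha with h | h
    · exact h ▸ (hb x).1
    · obtain ⟨y, hy, rfl⟩ := Finset.mem_image.1 h
      exact hm y x (Finset.mem_filter.1 hy).2.le
  have htrans : ∀ x, transfer f x = f x - M x := fun _ => rfl
  -- key lemma by strong induction on card
  have key : ∀ n (C : Finset P), C.card = n → IsChain (· ≤ ·) (C : Set P) →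
      ∀ t ∈ C, (∀ x ∈ C, x ≤ t) → ∑ x ∈ C, transfer f x ≤ f t := by
    intro n
    induction n with
    | zero => intro C hC _ t ht _; simp [Finset.card_eq_zero.1 hC] at ht
    | succ n ih =>
      intro C hC hchain t ht htop
      have hsum : ∑ x ∈ C, transfer f x
          = transfer f t + ∑ x ∈ C.erase t, transfer f x :=
        (Finset.add_sum_erase C (transfer f) ht).symm
      rcases (C.erase t).eq_empty_or_nonempty with he | hne
      · rw [hsum, he, Finset.sum_empty, add_zero, htrans]
        linarith [hM0 t]
      · obtain ⟨t', ht', hmax⟩ := Finset.exists_maximal hne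
        have hmax : ∀ x ∈ C.erase t, ¬ t' < x := fun x hx h => h.not_ge (hmax hx h.le)
        have hchain' : IsChain (· ≤ ·) ((C.erase t : Finset P) : Set P) :=
          hchain.mono (by intro x hx; exact Finset.mem_of_mem_erase hx)
        have htop' : ∀ x ∈ C.erase t, x ≤ t' := by
          intro x hx
          rcases eq_or_ne x t' with rfl | hne'
          · exact le_rfl
          · rcases hchain' hx ht' hne' with h | h
            · exact h
            · exact absurd (lt_of_le_of_ne h (Ne.symm hne')) (hmax x hx)
        have hcard : (C.erase t).card = n := by
          rw [Finset.card_erase_of_mem ht, hC]; rfl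
        have hrec := ih (C.erase t) hcard hchain' t' ht' htop'
        have ht'lt : t' < t :=
          lt_of_le_of_ne (htop t' (Finset.mem_of_mem_erase ht'))
            (Finset.ne_of_mem_erase ht')
        have := hMlt ht'lt
        rw [hsum, htrans]
        linarith
  refine ⟨fun x => ?_, fun C hC => ?_⟩
  · rw [htrans]; linarith [hMle x]
  · rcases C.eq_empty_or_nonempty with rfl | hne
    · simp
    · obtain ⟨t, ht, hmax⟩ := Finset.exists_maximal hne
      have hmax : ∀ x ∈ C, ¬ t < x := fun x hx h => h.not_ge (hmax hx h.le)
      have htop : ∀ x ∈ C, x ≤ t := by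
        intro x hx
        rcases eq_or_ne x t with rfl | hne'
        · exact le_rfl
        · rcases hC hx ht hne' with h | h
          · exact h
          · exact absurd (lt_of_le_of_ne h (Ne.symm hne')) (hmax x hx)
      exact le_trans (key C.card C rfl hC t ht htop) (hb t).2
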